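/- The initial monomial of [T] for a straight tableau T of row-convex shape D, with respect to the default diagonal term order, occurs with coefficient ±1 and equals ∏_l x_{(w'_T)_l, c_l}, where w'_T is the reverse column word of T and c_l is the column of the l-th cell in column-reading order. Consequently the modified column word of a straight tableau can be read from the initial monomial of [T]. -/

import Mathlib

open scoped BigOperators

/-- A cell `(row, column)` of a diagram. -/
abbrev Cell := ℕ × ℕ

/-- A shape is row-convex if its rows have no gaps. -/
def RowConvex (D : Finset Cell) : Prop :=
  ∀ r i j k : ℕ, (r, i) ∈ D → (r, k) ∈ D → i ≤ j → j ≤ k → (r, j) ∈ D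

/-- Rows strictly increase left to right (negative-letter convention). -/
def RowStandard (D : Finset Cell) (T : Cell → ℕ) : Prop :=
  ∀ r i j : ℕ, (r, i) ∈ D → (r, j) ∈ D → i < j → T (r, i) < T (r, j)

/-- A straight tableau (negative-letter case). -/
def Straight (D : Finset Cell) (T : Cell → ℕ) : Prop :=
  RowStandard D T ∧
    ∀ i j k : ℕ, (i, k) ∈ D → (j, k) ∈ D → i < j → T (j, k) < T (i, k) →
      1 ≤ k ∧ (i, k - 1) ∈ D ∧ T (j, k) < T (i, k - 1)

/-- Sorted list of column indices of the cells of `D` in row `r`. -/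
def rowColsList (D : Finset Cell) (r : ℕ) : List ℕ :=
  ((D.filter (fun c => c.1 = r)).val.map Prod.snd).sort (· ≤ ·)

/-- The bracket (determinant of the minor of the generic matrix `(x_{l,p})`)
corresponding to row `r` of the tableau `T`. -/
noncomputable def rowBracket (D : Finset Cell) (T : Cell → ℕ) (r : ℕ) :
    MvPolynomial Cell ℤ :=
  Matrix.det (Matrix.of fun s t : Fin (rowColsList D r).length =>
    MvPolynomial.X (T (r, (rowColsList D r).get s), (rowColsList D r).get t))

/-- `[T]`: the product over the rows of `D` of the row brackets. -/
noncomputable def bracket (D : Finset Cell) (T : Cell → ℕ) : MvPolynomial Cell ℤ :=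
  ∏ r ∈ D.image Prod.fst, rowBracket D T r

/-- Multiset of entries of `T` in column `k` of `D`. -/
def colEntries (D : Finset Cell) (T : Cell → ℕ) (k : ℕ) : Multiset ℕ :=
  (D.filter (fun c => c.2 = k)).val.map T

/-- The modified column word: entries of each column in weakly decreasing
order, columns read left to right. -/
def modColWord (D : Finset Cell) (T : Cell → ℕ) : List ℕ :=
  (List.range (D.sup Prod.snd + 1)).flatMap fun k =>
    ((colEntries D T k).sort (· ≤ ·)).reverse

/-- The column word: entries read bottom to top within each column, columns
left to right. -/
def colWord (D : Finset Cell) (T : Cell → ℕ) : List ℕ :=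
  (List.range (D.sup Prod.snd + 1)).flatMap fun k =>
    (List.range (D.sup Prod.fst + 1)).reverse.filterMap fun i =>
      if (i, k) ∈ D then some (T (i, k)) else none

/-- Strict lexicographic order on words. -/
def lexLt (u v : List ℕ) : Prop := List.Lex (· < ·) u v

/-- Weak lexicographic order on words. -/
def lexLe (u v : List ℕ) : Prop := u = v ∨ List.Lex (· < ·) u v

/-- `varGt v w`: the variable `x_v` is greater than `x_w` in the default
diagonal order: strictly earlier column, or same column and strictly larger
row index (letter). -/
def varGt (v w : Cell) : Prop := v.2 < w.2 ∨ (v.2 = w.2 ∧ w.1 < v.1)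

/-- The default diagonal term order on monomials: `monLt M N` iff the greatest
variable occurring to different powers in `M` and `N` divides `N` to a higher
power. -/
def monLt (M N : Cell →₀ ℕ) : Prop :=
  ∃ v : Cell, M v < N v ∧ ∀ w : Cell, varGt w v → M w = N w

/-- The diagonal monomial of a tableau: the product over the cells `(i, c)` of
`D` of the variables `x_{T(i,c), c}`. -/
noncomputable def diagMon (D : Finset Cell) (T : Cell → ℕ) : Cell →₀ ℕ :=
  ∑ c ∈ D, Finsupp.single (T c, c.2) 1

/-- `m` is the initial (smallest) monomial of `p` in the default diagonal term
order. -/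
def IsInitMon (p : MvPolynomial Cell ℤ) (m : Cell →₀ ℕ) : Prop :=
  m ∈ p.support ∧ ∀ m' ∈ p.support, m' = m ∨ monLt m m'

/-! In a row bracket, both the letters `T (r, ·)` and the column indices increase along the row.
If a permutation `π ≠ 1` first moves `t₀`, then `π t₀ > t₀`, so the term of `π` agrees with the
diagonal term in all earlier columns and uses a strictly greater variable in the column of `t₀`:
the diagonal term is the lowest one. Reindexing variables by (column, reversed letter) turns the
diagonal order into the lexicographic order on exponents, which is a total order compatible with
addition, so lowest terms multiply and the lowest term of `[T]` is the product of the row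
diagonals, with coefficient `1`. -/

open MvPolynomial

section LowestMonomial

variable {σ R Γ : Type*} [CommSemiring R] [AddCommMonoid Γ] [LinearOrder Γ]
  [IsOrderedCancelAddMonoid Γ] (f : (σ →₀ ℕ) →+ Γ)

def IsMonicLowest (p : MvPolynomial σ R) (m : σ →₀ ℕ) : Prop :=
  coeff m p = 1 ∧ ∀ a ∈ p.support, f m ≤ f a

variable {f}

theorem IsMonicLowest.mul (hf : Function.Injective f) {p q : MvPolynomial σ R}
    {m n : σ →₀ ℕ} (hp : IsMonicLowest f p m) (hq : IsMonicLowest f q n) :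
    IsMonicLowest f (p * q) (m + n) := by
  classical
  refine ⟨?_, fun c hc => ?_⟩
  · rw [coeff_mul, Finset.sum_eq_single_of_mem (m, n)
      (Finset.HasAntidiagonal.mem_antidiagonal.2 rfl), hp.1, hq.1, one_mul]
    rintro ⟨a, b⟩ hab hne
    by_contra hc
    have ha := hp.2 a (mem_support_iff.2 (left_ne_zero_of_mul hc))
    have hb := hq.2 b (mem_support_iff.2 (right_ne_zero_of_mul hc))
    have hsum : f m + f n = f a + f b := by
      rw [← map_add, ← map_add, Finset.HasAntidiagonal.mem_antidiagonal.1 hab]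
    obtain ⟨hma, hnb⟩ := (add_eq_add_iff_eq_and_eq ha hb).1 hsum
    exact hne (Prod.ext (hf hma).symm (hf hnb).symm)
  · obtain ⟨a, ha, b, hb, rfl⟩ := Finset.mem_add.1 (support_mul p q hc)
    rw [map_add, map_add]
    exact add_le_add (hp.2 a ha) (hq.2 b hb)

theorem IsMonicLowest.prod (hf : Function.Injective f) {ι : Type*} (s : Finset ι)
    {p : ι → MvPolynomial σ R} {m : ι → σ →₀ ℕ} (h : ∀ i ∈ s, IsMonicLowest f (p i) (m i)) :
    IsMonicLowest f (∏ i ∈ s, p i) (∑ i ∈ s, m i) := by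
  classical
  induction s using Finset.induction with
  | empty =>
    refine ⟨by simp, fun a ha => ?_⟩
    rw [Finset.prod_empty, mem_support_iff, coeff_one, ne_eq, ite_eq_right_iff,
      Classical.not_imp] at ha
    rw [Finset.sum_empty, ha.1]
  | insert i s hi ih =>
    rw [Finset.prod_insert hi, Finset.sum_insert hi]
    exact (h i (Finset.mem_insert_self i s)).mul hf
      (ih fun j hj => h j (Finset.mem_insert_of_mem hj))

end LowestMonomial

def diagKey : Cell ≃ ℕ ×ₗ ℕᵒᵈ :=
  ((Equiv.prodComm ℕ ℕ).trans ((Equiv.refl ℕ).prodCongr OrderDual.toDual)).trans toLex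

theorem varGt_iff_diagKey_lt (v w : Cell) : varGt v w ↔ diagKey v < diagKey w := by
  simp [varGt, diagKey, Prod.Lex.lt_iff]

noncomputable def diagOrder : (Cell →₀ ℕ) →+ Lex ((ℕ ×ₗ ℕᵒᵈ) →₀ ℕ) :=
  (toLexAddEquiv _).toAddMonoidHom.comp (Finsupp.domCongr diagKey).toAddMonoidHom

theorem diagOrder_injective : Function.Injective diagOrder :=
  (toLexAddEquiv _).injective.comp (Finsupp.domCongr diagKey).injective

theorem diagOrder_apply (M : Cell →₀ ℕ) (v : Cell) : ofLex (diagOrder M) (diagKey v) = M v := by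
  change Finsupp.domCongr diagKey M (diagKey v) = M v
  simp

theorem monLt_iff_diagOrder_lt (M N : Cell →₀ ℕ) : monLt M N ↔ diagOrder M < diagOrder N := by
  rw [Finsupp.Lex.lt_iff, monLt]
  refine diagKey.exists_congr fun v => ?_
  rw [and_comm, diagOrder_apply, diagOrder_apply]
  refine and_congr_left' (diagKey.forall_congr fun w => ?_)
  rw [varGt_iff_diagKey_lt, diagOrder_apply, diagOrder_apply]

section Determinant

variable {ι : Type*} [Fintype ι] (a c : ι → ℕ)

noncomputable def permMonomial (π : Equiv.Perm ι) : Cell →₀ ℕ :=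
  ∑ t, Finsupp.single (a (π t), c t) 1

theorem det_X_eq_sum_monomial [DecidableEq ι] :
    Matrix.det (Matrix.of fun s t => (X (a s, c t) : MvPolynomial Cell ℤ)) =
      ∑ π : Equiv.Perm ι, Equiv.Perm.sign π • monomial (permMonomial a c π) 1 := by
  simp only [Matrix.det_apply, Matrix.of_apply, permMonomial, monomial_sum_one, X]

variable {a c}

theorem permMonomial_apply_col (hc : Function.Injective c) (π : Equiv.Perm ι) (b : ℕ) (t : ι) :
    permMonomial a c π (b, c t) = if a (π t) = b then 1 else 0 := by
  rw [permMonomial, Finsupp.finsetSum_apply, Finset.sum_eq_single t]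
  · simp [Finsupp.single_apply]
  · intro t' _ ht'
    simp [hc.ne ht']
  · simp

theorem permMonomial_apply_of_notMem_range {p : ℕ} (hp : p ∉ Set.range c) (π : Equiv.Perm ι)
    (b : ℕ) : permMonomial a c π (b, p) = 0 := by
  rw [permMonomial, Finsupp.finsetSum_apply]
  refine Finset.sum_eq_zero fun t _ => Finsupp.single_eq_of_ne fun h => hp ⟨t, ?_⟩
  exact (congrArg Prod.snd h).symm

theorem monLt_permMonomial_one [LinearOrder ι] (ha : StrictMono a) (hc : StrictMono c)
    {π : Equiv.Perm ι} (hπ : π ≠ 1) : monLt (permMonomial a c 1) (permMonomial a c π) := by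
  obtain ⟨t₀, ht₀, hmin⟩ := Finset.exists_min_image (Finset.univ.filter fun t => π t ≠ t) id
    (by simpa [Finset.filter_nonempty_iff, Equiv.ext_iff] using hπ)
  replace ht₀ : π t₀ ≠ t₀ := (Finset.mem_filter.1 ht₀).2
  have hfix : ∀ t < t₀, π t = t := fun t ht => by
    by_contra h
    exact (hmin t (by simpa using h)).not_gt ht
  have hlt : t₀ < π t₀ := by
    refine (lt_or_gt_of_ne ht₀).resolve_left fun h => ht₀ ?_
    exact π.injective (hfix _ h)
  refine ⟨(a (π t₀), c t₀), ?_, ?_⟩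
  · simp [permMonomial_apply_col hc.injective, (ha hlt).ne]
  · rintro ⟨b, p⟩ (hp | ⟨hp, hb⟩)
    · by_cases hpc : p ∈ Set.range c
      · obtain ⟨t, rfl⟩ := hpc
        rw [permMonomial_apply_col hc.injective, permMonomial_apply_col hc.injective,
          Equiv.Perm.one_apply, hfix t (hc.lt_iff_lt.1 hp)]
      · rw [permMonomial_apply_of_notMem_range hpc, permMonomial_apply_of_notMem_range hpc]
    · obtain rfl : p = c t₀ := hp
      replace hb : a (π t₀) < b := hb
      rw [permMonomial_apply_col hc.injective, permMonomial_apply_col hc.injective,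
        Equiv.Perm.one_apply, if_neg (hb.trans' (ha hlt)).ne, if_neg hb.ne]

theorem isMonicLowest_det_X [DecidableEq ι] [LinearOrder ι] (ha : StrictMono a)
    (hc : StrictMono c) :
    IsMonicLowest diagOrder
      (Matrix.det (Matrix.of fun s t => (X (a s, c t) : MvPolynomial Cell ℤ)))
      (permMonomial a c 1) := by
  have hlt : ∀ π ≠ 1, diagOrder (permMonomial a c 1) < diagOrder (permMonomial a c π) :=
    fun π hπ => (monLt_iff_diagOrder_lt _ _).1 (monLt_permMonomial_one ha hc hπ)
  rw [det_X_eq_sum_monomial]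
  refine ⟨?_, fun m hm => ?_⟩
  · rw [coeff_sum, Finset.sum_eq_single 1 (fun π _ hπ => ?_) (by simp)]
    · simp
    · rw [coeff_smul, coeff_monomial, if_neg (ne_of_apply_ne _ (hlt π hπ).ne'), smul_zero]
  · rw [mem_support_iff, coeff_sum] at hm
    obtain ⟨π, -, hπ⟩ := Finset.exists_ne_zero_of_sum_ne_zero hm
    rw [coeff_smul, coeff_monomial] at hπ
    obtain rfl : permMonomial a c π = m := by_contra fun h => hπ (by rw [if_neg h, smul_zero])
    obtain rfl | hπ1 := eq_or_ne π 1
    · exact le_rfl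
    · exact (hlt π hπ1).le

end Determinant

theorem IsMonicLowest.isInitMon {p : MvPolynomial Cell ℤ} {m : Cell →₀ ℕ}
    (h : IsMonicLowest diagOrder p m) : IsInitMon p m := by
  refine ⟨mem_support_iff.2 (h.1 ▸ one_ne_zero), fun m' hm' => ?_⟩
  rw [monLt_iff_diagOrder_lt]
  exact (h.2 m' hm').eq_or_lt.imp (fun e => (diagOrder_injective e).symm) id

section Rows

variable (D : Finset Cell) (r : ℕ)

theorem mem_rowColsList {x : ℕ} : x ∈ rowColsList D r ↔ (r, x) ∈ D := by
  simp [rowColsList, eq_comm]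

theorem rowColsList_sortedLT : (rowColsList D r).SortedLT := by
  refine (Multiset.pairwise_sort _ _).sortedLE.sortedLT_of_nodup ?_
  rw [← Multiset.coe_nodup, Multiset.sort_eq]
  refine (Finset.nodup _).map_on fun x hx y hy hxy => Prod.ext ?_ hxy
  simp_all

theorem sum_rowColsList {M : Type*} [AddCommMonoid M] (g : ℕ → M) :
    ∑ t, g ((rowColsList D r).get t) = ∑ x ∈ D with x.1 = r, g x.2 := by
  simp only [List.get_eq_getElem, Fin.sum_univ_fun_getElem]
  rw [← Multiset.sum_coe, ← Multiset.map_coe]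
  unfold rowColsList
  rw [Multiset.sort_eq, Multiset.map_map, Finset.sum_eq_multiset_sum]
  rfl

theorem isMonicLowest_rowBracket {T : Cell → ℕ} (hT : RowStandard D T) :
    IsMonicLowest diagOrder (rowBracket D T r)
      (∑ x ∈ D with x.1 = r, Finsupp.single (T x, x.2) 1) := by
  have hc := (rowColsList_sortedLT D r).strictMono_get
  have hmem := fun t => (mem_rowColsList D r).1 ((rowColsList D r).get_mem t)
  have ha : StrictMono fun t => T (r, (rowColsList D r).get t) :=
    fun s t hst => hT r _ _ (hmem s) (hmem t) (hc hst)
  convert isMonicLowest_det_X ha hc using 1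
  · rfl
  · refine (Finset.sum_congr rfl fun x hx => ?_).trans
      (sum_rowColsList D r fun y => Finsupp.single (T (r, y), y) 1).symm
    rw [← (Finset.mem_filter.1 hx).2]

end Rows

theorem diagMon_eq_sum_rows (D : Finset Cell) (T : Cell → ℕ) :
    diagMon D T =
      ∑ r ∈ D.image Prod.fst, ∑ x ∈ D with x.1 = r, Finsupp.single (T x, x.2) 1 :=
  (Finset.sum_fiberwise_of_maps_to (fun _ hx => Finset.mem_image_of_mem Prod.fst hx) _).symm

theorem initial_monomial_of_straight_general
    (D : Finset Cell) (T : Cell → ℕ)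
    (hT : Straight D T) :
    IsInitMon (bracket D T) (diagMon D T) ∧
      (MvPolynomial.coeff (diagMon D T) (bracket D T) = 1 ∨
        MvPolynomial.coeff (diagMon D T) (bracket D T) = -1) := by
  have h : IsMonicLowest diagOrder (bracket D T) (diagMon D T) := by
    rw [bracket, diagMon_eq_sum_rows]
    exact .prod diagOrder_injective _ fun r _ => isMonicLowest_rowBracket D r hT.1
  exact ⟨h.isInitMon, Or.inl h.1⟩

/-- For a straight tableau `T` of row-convex shape `D`, the initial monomial of
`[T]` in the default diagonal term order is `∏_l x_{(w'_T)_l, c_l}`, i.e. the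
diagonal monomial `∏_{(i,c) ∈ D} x_{T(i,c), c}` (grouping the reverse column
word by columns), and it occurs with coefficient `±1`.  In particular the
(modified) column word of a straight tableau can be read off from the initial
monomial of `[T]`. -/
theorem initial_monomial_of_straight
    (D : Finset Cell) (hD : RowConvex D) (T : Cell → ℕ)
    (hT : Straight D T) :
    IsInitMon (bracket D T) (diagMon D T) ∧
      (MvPolynomial.coeff (diagMon D T) (bracket D T) = 1 ∨
        MvPolynomial.coeff (diagMon D T) (bracket D T) = -1) :=
  initial_monomial_of_straight_general D T hT
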